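/- arXiv:1904.11880 — 8 statements merged into one kernel-verified Lean document; each statement's English description precedes it below -/
import Mathlib

section
/- Let A and B be bounded self-adjoint operators on a complex Hilbert space with n ≤ A ≤ N and m ≤ B ≤ M for positive reals n < N and m < M, and let f : (0,∞) → [0,∞) be convex. Fix v ∈ (0,1) and set a = (1-v)n + vm, b = (1-v)N + vM. If [a,b] ∩ [n,N] = ∅ and [a,b] ∩ [m,M] = ∅, then f((1-v)A + vB) ≤ (1-v)f(A) + v f(B) in the operator (Loewner) order. -/
lemma my_secant_upper {f : ℝ → ℝ} {s : Set ℝ} (hf : ConvexOn ℝ s f) {a b t : ℝ}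
    (ha : a ∈ s) (hb : b ∈ s) (hab : a < b) (ht : t ∈ Set.Icc a b) :
    f t ≤ f a + (f b - f a) / (b - a) * (t - a) := by
  obtain ⟨h1, h2⟩ := ht
  have hba : (0:ℝ) < b - a := by linarith
  set u := (t - a) / (b - a) with hu
  have hu0 : 0 ≤ u := div_nonneg (by linarith) hba.le
  have hu1 : u ≤ 1 := by rw [hu, div_le_one hba]; linarith
  have key := hf.2 ha hb (by linarith : (0:ℝ) ≤ 1 - u) hu0 (by ring)
  have ht' : (1 - u) • a + u • b = t := by
    simp only [smul_eq_mul, hu]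
    field_simp
    ring
  rw [ht'] at key
  simp only [smul_eq_mul] at key
  have h3 : (f b - f a) / (b - a) * (t - a) = u * (f b - f a) := by
    rw [hu]; field_simp
  rw [h3]; linarith

lemma my_secant_lower {f : ℝ → ℝ} {s : Set ℝ} (hf : ConvexOn ℝ s f) {a b t : ℝ}
    (ha : a ∈ s) (hb : b ∈ s) (hts : t ∈ s) (hab : a < b) (h : t ≤ a ∨ b ≤ t) :
    f a + (f b - f a) / (b - a) * (t - a) ≤ f t := by
  have hba : (0:ℝ) < b - a := by linarith
  rcases h with h | h
  · rcases eq_or_lt_of_le h with rfl | h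
    · simp
    · have key := hf.slope_mono_adjacent hts hb h hab
      rw [div_le_div_iff₀ (by linarith) hba] at key
      have h4 : f a - f t ≤ (f b - f a) * (a - t) / (b - a) := by
        rw [le_div_iff₀ hba]; nlinarith [key]
      have h5 : (f b - f a) / (b - a) * (t - a) = -((f b - f a) * (a - t) / (b - a)) := by ring
      rw [h5]; linarith
  · rcases eq_or_lt_of_le h with rfl | h
    · have h5 : (f b - f a) / (b - a) * (b - a) = f b - f a := div_mul_cancel₀ _ hba.ne'
      rw [h5]; linarith
    · have key := hf.slope_mono_adjacent ha hts hab h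
      rw [div_le_div_iff₀ hba (by linarith)] at key
      have h4 : (f b - f a) / (b - a) * (t - a) ≤ f t - f a := by
        rw [div_mul_eq_mul_div, div_le_iff₀ hba]
        nlinarith [key]
      linarith

set_option maxHeartbeats 1000000
set_option synthInstance.maxHeartbeats 400000

/-- operator Jensen inequality for a scalar convex function under a spectral
separation condition, for a fixed weight `v ∈ (0,1)`. -/
theorem operator_convexity_from_scalar_convexity
    {H : Type*} [NormedAddCommGroup H] [InnerProductSpace ℂ H] [CompleteSpace H]
    (A B : H →L[ℂ] H) (hA : IsSelfAdjoint A) (hB : IsSelfAdjoint B)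
    (n N m M : ℝ) (hn : 0 < n) (hnN : n < N) (hm : 0 < m) (hmM : m < M)
    (hA₁ : n • (1 : H →L[ℂ] H) ≤ A) (hA₂ : A ≤ N • (1 : H →L[ℂ] H))
    (hB₁ : m • (1 : H →L[ℂ] H) ≤ B) (hB₂ : B ≤ M • (1 : H →L[ℂ] H))
    (f : ℝ → ℝ) (hf : ConvexOn ℝ (Set.Ioi 0) f) (hf0 : ∀ t ∈ Set.Ioi (0 : ℝ), 0 ≤ f t)
    (v : ℝ) (hv : v ∈ Set.Ioo (0 : ℝ) 1)
    (a b : ℝ) (ha : a = (1 - v) * n + v * m) (hb : b = (1 - v) * N + v * M)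
    (hdis₁ : Set.Icc a b ∩ Set.Icc n N = ∅) (hdis₂ : Set.Icc a b ∩ Set.Icc m M = ∅) :
    cfc f ((1 - v) • A + v • B) ≤ (1 - v) • cfc f A + v • cfc f B := by
  obtain ⟨hv0, hv1⟩ := hv
  have hv1' : (0:ℝ) < 1 - v := by linarith
  have hab : a < b := by rw [ha, hb]; nlinarith
  have ha0 : 0 < a := by rw [ha]; nlinarith
  have hb0 : 0 < b := ha0.trans hab
  have haS : a ∈ Set.Ioi (0:ℝ) := ha0
  have hbS : b ∈ Set.Ioi (0:ℝ) := hb0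
  -- positions of the spectra relative to [a,b]
  have hpos₁ : N < a ∨ b < n := by
    by_contra h
    push_neg at h
    have : max a n ∈ Set.Icc a b ∩ Set.Icc n N :=
      ⟨⟨le_max_left _ _, max_le hab.le h.2⟩, ⟨le_max_right _ _, max_le h.1 hnN.le⟩⟩
    simp [hdis₁] at this
  have hpos₂ : M < a ∨ b < m := by
    by_contra h
    push_neg at h
    have : max a m ∈ Set.Icc a b ∩ Set.Icc m M :=
      ⟨⟨le_max_left _ _, max_le hab.le h.2⟩, ⟨le_max_right _ _, max_le h.1 hmM.le⟩⟩
    simp [hdis₂] at this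
  -- continuity of f
  have hfc : ContinuousOn f (Set.Ioi (0:ℝ)) := hf.continuousOn isOpen_Ioi
  -- algebraMap vs smul one
  have halg : ∀ r : ℝ, r • (1 : H →L[ℂ] H) = algebraMap ℝ (H →L[ℂ] H) r :=
    fun r => (Algebra.algebraMap_eq_smul_one r).symm
  -- spectra inclusions
  have hspecA : spectrum ℝ A ⊆ Set.Icc n N := fun x hx =>
    ⟨(algebraMap_le_iff_le_spectrum hA).mp (halg n ▸ hA₁) x hx,
     (le_algebraMap_iff_spectrum_le hA).mp (halg N ▸ hA₂) x hx⟩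
  have hspecB : spectrum ℝ B ⊆ Set.Icc m M := fun x hx =>
    ⟨(algebraMap_le_iff_le_spectrum hB).mp (halg m ▸ hB₁) x hx,
     (le_algebraMap_iff_spectrum_le hB).mp (halg M ▸ hB₂) x hx⟩
  have hspecA' : spectrum ℝ A ⊆ Set.Ioi (0:ℝ) := fun x hx => hn.trans_le (hspecA hx).1
  have hspecB' : spectrum ℝ B ⊆ Set.Ioi (0:ℝ) := fun x hx => hm.trans_le (hspecB hx).1
  -- nonneg smul preserves order
  have hsm : ∀ (r : ℝ) (D : H →L[ℂ] H), 0 ≤ r → 0 ≤ D → 0 ≤ r • D := by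
    intro r D hr hD
    have h1 : 0 ≤ star (Real.sqrt r • (1 : H →L[ℂ] H)) * D * (Real.sqrt r • (1 : H →L[ℂ] H)) :=
      star_left_conjugate_nonneg hD _
    have h2 : star (Real.sqrt r • (1 : H →L[ℂ] H)) * D * (Real.sqrt r • (1 : H →L[ℂ] H))
        = r • D := by
      rw [star_smul, star_one, star_trivial, smul_mul_assoc, one_mul, mul_smul_comm, mul_one,
        smul_smul, Real.mul_self_sqrt hr]
    rwa [h2] at h1
  have hsmle : ∀ (r : ℝ) (X Y : H →L[ℂ] H), 0 ≤ r → X ≤ Y → r • X ≤ r • Y := by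
    intro r X Y hr hXY
    have := hsm r (Y - X) hr (sub_nonneg.mpr hXY)
    rw [smul_sub] at this
    exact sub_nonneg.mp this
  set T : H →L[ℂ] H := (1 - v) • A + v • B with hT
  have hTsa : IsSelfAdjoint T := by
    simp only [hT, IsSelfAdjoint, star_add, star_smul, star_trivial, hA.star_eq, hB.star_eq]
  have hT₁ : a • (1 : H →L[ℂ] H) ≤ T := by
    have h1 := hsmle (1 - v) (n • (1 : H →L[ℂ] H)) A hv1'.le hA₁
    have h2 := hsmle v (m • (1 : H →L[ℂ] H)) B hv0.le hB₁
    have : a • (1 : H →L[ℂ] H) = (1 - v) • n • (1 : H →L[ℂ] H) + v • m • (1 : H →L[ℂ] H) := by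
      rw [ha, smul_smul, smul_smul, ← add_smul]
    rw [this]
    exact add_le_add h1 h2
  have hT₂ : T ≤ b • (1 : H →L[ℂ] H) := by
    have h1 := hsmle (1 - v) A (N • (1 : H →L[ℂ] H)) hv1'.le hA₂
    have h2 := hsmle v B (M • (1 : H →L[ℂ] H)) hv0.le hB₂
    have : b • (1 : H →L[ℂ] H) = (1 - v) • N • (1 : H →L[ℂ] H) + v • M • (1 : H →L[ℂ] H) := by
      rw [hb, smul_smul, smul_smul, ← add_smul]
    rw [this]
    exact add_le_add h1 h2
  have hspecT : spectrum ℝ T ⊆ Set.Icc a b := fun x hx =>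
    ⟨(algebraMap_le_iff_le_spectrum hTsa).mp (halg a ▸ hT₁) x hx,
     (le_algebraMap_iff_spectrum_le hTsa).mp (halg b ▸ hT₂) x hx⟩
  have hspecT' : spectrum ℝ T ⊆ Set.Ioi (0:ℝ) := fun x hx => ha0.trans_le (hspecT hx).1
  -- the secant line
  set α : ℝ := (f b - f a) / (b - a) with hα
  set c : ℝ := f a + α * (0 - a) with hc
  set L : ℝ → ℝ := fun t => α * t + c with hL
  have hLval : ∀ t : ℝ, L t = f a + α * (t - a) := by
    intro t; simp only [hL, hc]; ring
  have hcfcL : ∀ (X : H →L[ℂ] H), IsSelfAdjoint X →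
      cfc L X = α • X + c • (1 : H →L[ℂ] H) := by
    intro X hX
    rw [hL, cfc_add X (fun t => α * t) (fun _ => c) (by fun_prop) (by fun_prop),
      cfc_const_mul_id α X hX, cfc_const c X hX, halg c]
  have step1 : cfc f T ≤ cfc L T := by
    refine cfc_mono (fun x hx => ?_) (hfc.mono hspecT') (by fun_prop)
    rw [hLval x]
    exact my_secant_upper hf haS hbS hab (hspecT hx)
  have stepA : α • A + c • (1 : H →L[ℂ] H) ≤ cfc f A := by
    rw [← hcfcL A hA]
    refine cfc_mono (fun x hx => ?_) (by fun_prop) (hfc.mono hspecA')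
    rw [hLval x]
    refine my_secant_lower hf haS hbS (hspecA' hx) hab ?_
    rcases hpos₁ with h | h
    · exact Or.inl ((hspecA hx).2.trans h.le)
    · exact Or.inr (h.le.trans (hspecA hx).1)
  have stepB : α • B + c • (1 : H →L[ℂ] H) ≤ cfc f B := by
    rw [← hcfcL B hB]
    refine cfc_mono (fun x hx => ?_) (by fun_prop) (hfc.mono hspecB')
    rw [hLval x]
    refine my_secant_lower hf haS hbS (hspecB' hx) hab ?_
    rcases hpos₂ with h | h
    · exact Or.inl ((hspecB hx).2.trans h.le)
    · exact Or.inr (h.le.trans (hspecB hx).1)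
  have step2 : cfc L T = (1 - v) • (α • A + c • (1 : H →L[ℂ] H))
      + v • (α • B + c • (1 : H →L[ℂ] H)) := by
    rw [hcfcL T hTsa, hT]
    module
  calc cfc f T ≤ cfc L T := step1
    _ = (1 - v) • (α • A + c • (1 : H →L[ℂ] H)) + v • (α • B + c • (1 : H →L[ℂ] H)) := step2
    _ ≤ (1 - v) • cfc f A + v • cfc f B :=
        add_le_add (hsmle _ _ _ hv1'.le stepA) (hsmle _ _ _ hv0.le stepB)
end

section
/- Let A and B be bounded self-adjoint operators with n ≤ A ≤ N and m ≤ B ≤ M for positive reals n < N, m < M, and let f : (0,∞) → [0,∞) be concave. If for v = 1/2 the interval [(n+m)/2, (N+M)/2] is disjoint from both [n,N] and [m,M], then (f(A) + f(B))/2 ≤ f((A+B)/2) in the Loewner order. -/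
set_option maxHeartbeats 1000000
set_option synthInstance.maxHeartbeats 400000

section Scalar

variable {f : ℝ → ℝ} {p q t : ℝ}

/-- Left of the chord interval: f lies below the chord line through (p, f p), (q, f q). -/
lemma concave_le_chord_left (hf : ConcaveOn ℝ (Set.Ioi 0) f) (hp : 0 < p) (hpq : p < q)
    (ht : 0 < t) (htp : t ≤ p) :
    f t ≤ f p + (f q - f p) / (q - p) * (t - p) := by
  rcases eq_or_lt_of_le htp with rfl | htp'
  · simp
  · have h := hf.slope_anti_adjacent (x := t) (y := p) (z := q) ht (hp.trans hpq) htp' hpq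
    have h2 : (f q - f p) / (q - p) * (p - t) ≤ f p - f t :=
      (le_div_iff₀ (by linarith)).mp h
    have h3 : (f q - f p) / (q - p) * (t - p) = -((f q - f p) / (q - p) * (p - t)) := by ring
    linarith

/-- Right of the chord interval. -/
lemma concave_le_chord_right (hf : ConcaveOn ℝ (Set.Ioi 0) f) (hp : 0 < p) (hpq : p < q)
    (hqt : q ≤ t) :
    f t ≤ f p + (f q - f p) / (q - p) * (t - p) := by
  have hq : 0 < q := hp.trans hpq
  have hchord : (f q - f p) / (q - p) * (q - p) = f q - f p :=
    div_mul_cancel₀ _ (by linarith)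
  rcases eq_or_lt_of_le hqt with rfl | hqt'
  · linarith
  · have h := hf.slope_anti_adjacent (x := p) (y := q) (z := t) hp (hq.trans hqt') hpq hqt'
    have h2 : f t - f q ≤ (f q - f p) / (q - p) * (t - q) :=
      (div_le_iff₀ (by linarith)).mp h
    have h3 : (f q - f p) / (q - p) * (t - p)
        = (f q - f p) / (q - p) * (q - p) + (f q - f p) / (q - p) * (t - q) := by ring
    linarith

/-- Inside the chord interval, f lies above the chord. -/
lemma chord_le_concave (hf : ConcaveOn ℝ (Set.Ioi 0) f) (hp : 0 < p) (hpq : p < q)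
    (hpt : p ≤ t) (htq : t ≤ q) :
    f p + (f q - f p) / (q - p) * (t - p) ≤ f t := by
  have hq : 0 < q := hp.trans hpq
  have hne : q - p ≠ 0 := by linarith
  have key := hf.2 (Set.mem_Ioi.mpr hp) (Set.mem_Ioi.mpr hq)
    (show (0:ℝ) ≤ (q - t) / (q - p) from div_nonneg (by linarith) (by linarith))
    (show (0:ℝ) ≤ (t - p) / (q - p) from div_nonneg (by linarith) (by linarith))
    (show (q - t) / (q - p) + (t - p) / (q - p) = 1 by field_simp; ring)
  have hcomb : (q - t) / (q - p) * p + (t - p) / (q - p) * q = t := by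
    field_simp
    ring
  rw [smul_eq_mul, smul_eq_mul, smul_eq_mul, smul_eq_mul, hcomb] at key
  have : (q - t) / (q - p) * f p + (t - p) / (q - p) * f q
      = f p + (f q - f p) / (q - p) * (t - p) := by
    field_simp
    ring
  linarith

end Scalar

section Operator

variable {H : Type*} [NormedAddCommGroup H] [InnerProductSpace ℂ H] [CompleteSpace H]

lemma rsmul_le_rsmul {r : ℝ} (hr : 0 ≤ r) {X Y : H →L[ℂ] H} (h : X ≤ Y) :
    r • X ≤ r • Y :=
  smul_le_smul_of_nonneg_left h hr

lemma isSelfAdjoint_rsmul (r : ℝ) {X : H →L[ℂ] H} (hX : IsSelfAdjoint X) :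
    IsSelfAdjoint (r • X) := by
  rw [IsSelfAdjoint, star_smul, star_trivial, hX.star_eq]

lemma spectrum_subset_Icc {X : H →L[ℂ] H} (hX : IsSelfAdjoint X) {c d : ℝ}
    (h1 : c • (1 : H →L[ℂ] H) ≤ X) (h2 : X ≤ d • (1 : H →L[ℂ] H)) :
    spectrum ℝ X ⊆ Set.Icc c d := by
  intro x hx
  exact ⟨(algebraMap_le_iff_le_spectrum hX).mp (by rwa [Algebra.algebraMap_eq_smul_one]) x hx,
    (le_algebraMap_iff_spectrum_le hX).mp (by rwa [Algebra.algebraMap_eq_smul_one]) x hx⟩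

lemma cfc_affine (s c : ℝ) {X : H →L[ℂ] H} (hX : IsSelfAdjoint X) :
    cfc (fun t : ℝ => s * t + c) X = s • X + c • (1 : H →L[ℂ] H) := by
  rw [cfc_add (a := X) (fun t => s * t) (fun _ => c), cfc_const_mul s (fun t : ℝ => t) X,
    cfc_id' ℝ X, cfc_const c X, Algebra.algebraMap_eq_smul_one]

/-- Key separated case: spectrum of A below the midpoint interval, spectrum of B above. -/
lemma operator_concavity_midpoint_sep
    (A B : H →L[ℂ] H) (hA : IsSelfAdjoint A) (hB : IsSelfAdjoint B)
    (n N m M : ℝ) (hn : 0 < n) (hnN : n ≤ N) (hmM : m ≤ M)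
    (hA₁ : n • (1 : H →L[ℂ] H) ≤ A) (hA₂ : A ≤ N • (1 : H →L[ℂ] H))
    (hB₁ : m • (1 : H →L[ℂ] H) ≤ B) (hB₂ : B ≤ M • (1 : H →L[ℂ] H))
    (f : ℝ → ℝ) (hf : ConcaveOn ℝ (Set.Ioi 0) f)
    (hsep₁ : N < (n + m) / 2) (hsep₂ : (N + M) / 2 < m) :
    (2⁻¹ : ℝ) • (cfc f A + cfc f B) ≤ cfc f ((2⁻¹ : ℝ) • (A + B)) := by
  have hN : 0 < N := hn.trans_le hnN
  have hNm : N < m := by linarith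
  have hm : 0 < m := by linarith
  set C : H →L[ℂ] H := (2⁻¹ : ℝ) • (A + B) with hCdef
  have hC : IsSelfAdjoint C := isSelfAdjoint_rsmul _ (hA.add hB)
  -- bounds on C
  have hC₁ : ((n + m) / 2) • (1 : H →L[ℂ] H) ≤ C := by
    have h := rsmul_le_rsmul (by norm_num : (0:ℝ) ≤ 2⁻¹) (add_le_add hA₁ hB₁)
    calc ((n + m) / 2) • (1 : H →L[ℂ] H)
        = (2⁻¹ : ℝ) • (n • (1 : H →L[ℂ] H) + m • (1 : H →L[ℂ] H)) := by
          rw [← add_smul, smul_smul]; congr 1; ring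
      _ ≤ C := h
  have hC₂ : C ≤ ((N + M) / 2) • (1 : H →L[ℂ] H) := by
    have h := rsmul_le_rsmul (by norm_num : (0:ℝ) ≤ 2⁻¹) (add_le_add hA₂ hB₂)
    calc C ≤ (2⁻¹ : ℝ) • (N • (1 : H →L[ℂ] H) + M • (1 : H →L[ℂ] H)) := h
      _ = ((N + M) / 2) • (1 : H →L[ℂ] H) := by
          rw [← add_smul, smul_smul]; congr 1; ring
  -- spectra
  have hsA : spectrum ℝ A ⊆ Set.Icc n N := spectrum_subset_Icc hA hA₁ hA₂
  have hsB : spectrum ℝ B ⊆ Set.Icc m M := spectrum_subset_Icc hB hB₁ hB₂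
  have hsC : spectrum ℝ C ⊆ Set.Icc ((n + m) / 2) ((N + M) / 2) :=
    spectrum_subset_Icc hC hC₁ hC₂
  -- continuity of f
  have hfc : ContinuousOn f (Set.Ioi 0) := hf.continuousOn isOpen_Ioi
  have hIccA : Set.Icc n N ⊆ Set.Ioi 0 := fun x hx => lt_of_lt_of_le hn hx.1
  have hIccB : Set.Icc m M ⊆ Set.Ioi 0 := fun x hx => lt_of_lt_of_le hm hx.1
  have hIccC : Set.Icc ((n + m) / 2) ((N + M) / 2) ⊆ Set.Ioi 0 := fun x hx => by
    have := hx.1; simp only [Set.mem_Ioi]; linarith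
  -- the chord line
  set s : ℝ := (f m - f N) / (m - N) with hs
  set c : ℝ := f N - s * N with hc
  have hℓA : cfc f A ≤ cfc (fun t : ℝ => s * t + c) A := by
    refine cfc_mono (fun x hx => ?_) (hfc.mono (fun y hy => hIccA (hsA hy)))
      (Continuous.continuousOn (by fun_prop))
    have hx' := hsA hx
    have h := concave_le_chord_left hf hN hNm (hn.trans_le hx'.1) hx'.2
    have : s * x + c = f N + s * (x - N) := by rw [hc]; ring
    rw [this]
    exact h
  have hℓB : cfc f B ≤ cfc (fun t : ℝ => s * t + c) B := by
    refine cfc_mono (fun x hx => ?_) (hfc.mono (fun y hy => hIccB (hsB hy)))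
      (Continuous.continuousOn (by fun_prop))
    have hx' := hsB hx
    have h := concave_le_chord_right hf hN hNm hx'.1
    have : s * x + c = f N + s * (x - N) := by rw [hc]; ring
    rw [this]
    exact h
  have hℓC : cfc (fun t : ℝ => s * t + c) C ≤ cfc f C := by
    refine cfc_mono (fun x hx => ?_) (Continuous.continuousOn (by fun_prop))
      (hfc.mono (fun y hy => hIccC (hsC hy)))
    have hx' := hsC hx
    have h := chord_le_concave hf hN hNm (le_trans hsep₁.le hx'.1) (le_trans hx'.2 hsep₂.le)
    have : s * x + c = f N + s * (x - N) := by rw [hc]; ring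
    rw [this]
    exact h
  have hmid : (2⁻¹ : ℝ) • (cfc (fun t : ℝ => s * t + c) A + cfc (fun t : ℝ => s * t + c) B)
      = cfc (fun t : ℝ => s * t + c) C := by
    rw [cfc_affine s c hA, cfc_affine s c hB, cfc_affine s c hC, hCdef]
    module
  calc (2⁻¹ : ℝ) • (cfc f A + cfc f B)
      ≤ (2⁻¹ : ℝ) • (cfc (fun t : ℝ => s * t + c) A + cfc (fun t : ℝ => s * t + c) B) :=
        rsmul_le_rsmul (by norm_num) (add_le_add hℓA hℓB)
    _ = cfc (fun t : ℝ => s * t + c) C := hmid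
    _ ≤ cfc f C := hℓC

end Operator

/-- midpoint operator Jensen inequality for a scalar concave function under
a spectral separation condition. -/
theorem operator_concavity_midpoint
    {H : Type*} [NormedAddCommGroup H] [InnerProductSpace ℂ H] [CompleteSpace H]
    (A B : H →L[ℂ] H) (hA : IsSelfAdjoint A) (hB : IsSelfAdjoint B)
    (n N m M : ℝ) (hn : 0 < n) (hnN : n < N) (hm : 0 < m) (hmM : m < M)
    (hA₁ : n • (1 : H →L[ℂ] H) ≤ A) (hA₂ : A ≤ N • (1 : H →L[ℂ] H))
    (hB₁ : m • (1 : H →L[ℂ] H) ≤ B) (hB₂ : B ≤ M • (1 : H →L[ℂ] H))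
    (f : ℝ → ℝ) (hf : ConcaveOn ℝ (Set.Ioi 0) f) (hf0 : ∀ t ∈ Set.Ioi (0 : ℝ), 0 ≤ f t)
    (hdis₁ : Set.Icc ((n + m) / 2) ((N + M) / 2) ∩ Set.Icc n N = ∅)
    (hdis₂ : Set.Icc ((n + m) / 2) ((N + M) / 2) ∩ Set.Icc m M = ∅) :
    (2⁻¹ : ℝ) • (cfc f A + cfc f B) ≤ cfc f ((2⁻¹ : ℝ) • (A + B)) := by
  rw [Set.eq_empty_iff_forall_notMem] at hdis₁ hdis₂
  have hcase : N < (n + m) / 2 ∨ M < (n + m) / 2 := by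
    by_contra hcon
    push_neg at hcon
    obtain ⟨hN', hM'⟩ := hcon
    rcases le_total n m with hnm | hmn
    · exact hdis₁ ((n + m) / 2)
        ⟨⟨le_refl _, by linarith⟩, ⟨by linarith, hN'⟩⟩
    · exact hdis₂ ((n + m) / 2)
        ⟨⟨le_refl _, by linarith⟩, ⟨by linarith, hM'⟩⟩
  rcases hcase with h1 | h1
  · have h2 : (N + M) / 2 < m := by
      by_contra hcon
      push_neg at hcon
      have hnm : n < m := by linarith
      exact hdis₂ m ⟨⟨by linarith, hcon⟩, ⟨le_refl _, hmM.le⟩⟩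
    exact operator_concavity_midpoint_sep A B hA hB n N m M hn hnN.le hmM.le
      hA₁ hA₂ hB₁ hB₂ f hf h1 h2
  · have h2 : (N + M) / 2 < n := by
      by_contra hcon
      push_neg at hcon
      have hmn : m < n := by linarith
      exact hdis₁ n ⟨⟨by linarith, hcon⟩, ⟨le_refl _, hnN.le⟩⟩
    have := operator_concavity_midpoint_sep B A hB hA m M n N hm hmM.le hnN.le
      hB₁ hB₂ hA₁ hA₂ f hf (by linarith) (by linarith)
    rwa [add_comm (cfc f B) (cfc f A), add_comm B A] at this
end

section
/- Let A, B be strictly positive bounded operators such that the smallest closed interval containing the spectrum of (A+B)/2 is disjoint from those of A and of B. Then for every r with r > 1 or r < 0, 2^{1-r} (A+B)^r ≤ A^r + B^r in the Loewner order. -/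
open Set Pointwise in
private lemma rpow_convexOn_aux {r : ℝ} (hr : 1 < r ∨ r < 0) :
    ConvexOn ℝ (Set.Ioi (0:ℝ)) (fun t : ℝ => t ^ r) := by
  have hrr : 0 < r * (r - 1) := by rcases hr with h | h <;> nlinarith
  have hint : interior (Set.Ioi (0:ℝ)) = Set.Ioi 0 := interior_Ioi
  refine convexOn_of_hasDerivWithinAt2_nonneg (f' := fun x => r * x ^ (r - 1))
    (f'' := fun x => r * ((r - 1) * x ^ (r - 2))) (convex_Ioi 0) ?_ ?_ ?_ ?_
  · intro x hx
    exact (Real.hasDerivAt_rpow_const (Or.inl (ne_of_gt hx))).continuousAt.continuousWithinAt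
  · rw [hint]
    intro x hx
    exact (Real.hasDerivAt_rpow_const (Or.inl (ne_of_gt hx))).hasDerivWithinAt
  · rw [hint]
    intro x hx
    have h := ((Real.hasDerivAt_rpow_const (p := r - 1) (Or.inl (ne_of_gt hx))).const_mul r)
    have : r - 1 - 1 = r - 2 := by ring
    rw [this] at h
    exact h.hasDerivWithinAt
  · rw [hint]
    intro x hx
    have h2 := Real.rpow_pos_of_pos hx (r - 2)
    show 0 ≤ r * ((r - 1) * x ^ (r - 2))
    nlinarith

private lemma chord_bound_aux {f : ℝ → ℝ} (hf : ConvexOn ℝ (Set.Ioi (0:ℝ)) f)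
    (hd : ∀ x : ℝ, 0 < x → DifferentiableAt ℝ f x)
    {m M : ℝ} (hm : 0 < m) (hmM : m ≤ M) :
    ∃ α β : ℝ, (∀ u ∈ Set.Icc m M, f u ≤ α + β * u) ∧
      (∀ t : ℝ, 0 < t → t ∉ Set.Icc m M → α + β * t ≤ f t) := by
  have hM : 0 < M := lt_of_lt_of_le hm hmM
  rcases eq_or_lt_of_le hmM with rfl | hlt
  · refine ⟨f m - deriv f m * m, deriv f m, ?_, ?_⟩
    · intro u hu
      have hu' : u = m := le_antisymm hu.2 hu.1
      subst hu'
      linarith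
    · intro t ht hts
      have htm : t ≠ m := fun h => hts (h ▸ Set.left_mem_Icc.mpr le_rfl)
      rcases lt_or_gt_of_ne htm with h | h
      · have hs := hf.slope_le_deriv (Set.mem_Ioi.mpr ht) (Set.mem_Ioi.mpr hm) h (hd m hm)
        rw [slope_def_field] at hs
        have h0 : 0 < m - t := sub_pos.mpr h
        have := (div_le_iff₀ h0).mp hs
        nlinarith
      · have hs := hf.deriv_le_slope (Set.mem_Ioi.mpr hm) (Set.mem_Ioi.mpr ht) h (hd m hm)
        rw [slope_def_field] at hs
        have h0 : 0 < t - m := sub_pos.mpr h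
        have := (le_div_iff₀ h0).mp hs
        nlinarith
  · set β := (f M - f m) / (M - m) with hβdef
    have hMm : (0:ℝ) < M - m := sub_pos.mpr hlt
    have hβ : β * (M - m) = f M - f m := div_mul_cancel₀ _ hMm.ne'
    refine ⟨f m - β * m, β, ?_, ?_⟩
    · intro u hu
      rcases eq_or_lt_of_le hu.1 with rfl | h1
      · linarith
      rcases eq_or_lt_of_le hu.2 with rfl | h2
      · nlinarith
      have key := hf.secant_mono_aux1 (Set.mem_Ioi.mpr hm) (Set.mem_Ioi.mpr hM) h1 h2
      nlinarith
    · intro t ht hts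
      rw [Set.mem_Icc, not_and_or, not_le, not_le] at hts
      rcases hts with h | h
      · have hs := hf.secant_mono (Set.mem_Ioi.mpr hm) (Set.mem_Ioi.mpr ht)
          (Set.mem_Ioi.mpr hM) (ne_of_lt h) (ne_of_gt hlt) (le_of_lt (h.trans hlt))
        have h0 : t - m < 0 := by linarith
        rw [← hβdef] at hs
        have := (div_le_iff_of_neg h0).mp hs
        nlinarith
      · have hs := hf.secant_mono (Set.mem_Ioi.mpr hm) (Set.mem_Ioi.mpr hM)
          (Set.mem_Ioi.mpr (hm.trans (lt_of_le_of_lt hmM h))) (ne_of_gt hlt)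
          (ne_of_gt (lt_of_le_of_lt hmM h)) (le_of_lt h)
        have h0 : 0 < t - m := by linarith
        rw [← hβdef] at hs
        have := (le_div_iff₀ h0).mp hs
        nlinarith

open Pointwise

set_option maxHeartbeats 1000000 in
set_option synthInstance.maxHeartbeats 400000 in
open Set in
/-- STATEMENT 6: for strictly positive operators whose spectral intervals are disjoint from
that of `(A+B)/2`, the power function `t^r`, `r > 1` or `r < 0`, satisfies `2^{1-r}(A+B)^r ≤ A^r + B^r`. -/
theorem power_superadditive_r_outside_unit_interval
    {H : Type*} [NormedAddCommGroup H] [InnerProductSpace ℂ H] [CompleteSpace H]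
    (A B : H →L[ℂ] H) (hA : IsSelfAdjoint A) (hB : IsSelfAdjoint B)
    (hA' : spectrum ℝ A ⊆ Set.Ioi 0) (hB' : spectrum ℝ B ⊆ Set.Ioi 0)
    (tau : (H →L[ℂ] H) → Set ℝ)
    (htau : tau = fun X => Set.Icc (sInf (spectrum ℝ X)) (sSup (spectrum ℝ X)))
    (hdis₁ : tau A ∩ tau ((2⁻¹ : ℝ) • (A + B)) = ∅)
    (hdis₂ : tau B ∩ tau ((2⁻¹ : ℝ) • (A + B)) = ∅)
    (r : ℝ) (hr : 1 < r ∨ r < 0) :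
    ((2 : ℝ) ^ (1 - r)) • cfc (fun t : ℝ => t ^ r) (A + B) ≤
      cfc (fun t : ℝ => t ^ r) A + cfc (fun t : ℝ => t ^ r) B := by
  rcases subsingleton_or_nontrivial H with hH | hH
  · exact le_of_eq (Subsingleton.elim _ _)
  subst htau
  set f : ℝ → ℝ := fun t => t ^ r with hfdef
  set S : H →L[ℂ] H := A + B with hSdef
  set C : H →L[ℂ] H := (2⁻¹ : ℝ) • S with hCdef
  have hSsa : IsSelfAdjoint S := hA.add hB
  have hCsa : IsSelfAdjoint C := by
    rw [hCdef, IsSelfAdjoint, star_smul, star_trivial, hSsa.star_eq]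
  -- basic spectral facts
  have hAne : (spectrum ℝ A).Nonempty := hA.spectrum_nonempty
  have hBne : (spectrum ℝ B).Nonempty := hB.spectrum_nonempty
  have hSne : (spectrum ℝ S).Nonempty := hSsa.spectrum_nonempty
  have hAcp : IsCompact (spectrum ℝ A) := spectrum.isCompact A
  have hBcp : IsCompact (spectrum ℝ B) := spectrum.isCompact B
  have hCcp : IsCompact (spectrum ℝ C) := spectrum.isCompact C
  -- spectrum of a difference with a real scalar
  have hspec_sub : ∀ (X : H →L[ℂ] H) (c : ℝ),
      spectrum ℝ (X - algebraMap ℝ (H →L[ℂ] H) c) = spectrum ℝ X - {c} := fun X c =>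
    (spectrum.sub_singleton_eq X c).symm
  -- lower bounds of spectra give operator bounds
  set εA : ℝ := sInf (spectrum ℝ A) with hεA
  set εB : ℝ := sInf (spectrum ℝ B) with hεB
  have hεA_mem : εA ∈ spectrum ℝ A := hAcp.sInf_mem hAne
  have hεB_mem : εB ∈ spectrum ℝ B := hBcp.sInf_mem hBne
  have hεA_pos : 0 < εA := hA' hεA_mem
  have hεB_pos : 0 < εB := hB' hεB_mem
  have hopA : 0 ≤ A - algebraMap ℝ (H →L[ℂ] H) εA := by
    rw [StarOrderedRing.nonneg_iff_spectrum_nonneg (R := ℝ) _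
      (hA.sub (IsSelfAdjoint.algebraMap _ (.all εA)))]
    intro x hx
    rw [hspec_sub] at hx
    obtain ⟨y, hy, z, hz, rfl⟩ := hx
    rw [Set.mem_singleton_iff] at hz
    subst hz
    have : εA ≤ y := csInf_le hAcp.bddBelow hy
    simpa using this
  have hopB : 0 ≤ B - algebraMap ℝ (H →L[ℂ] H) εB := by
    rw [StarOrderedRing.nonneg_iff_spectrum_nonneg (R := ℝ) _
      (hB.sub (IsSelfAdjoint.algebraMap _ (.all εB)))]
    intro x hx
    rw [hspec_sub] at hx
    obtain ⟨y, hy, z, hz, rfl⟩ := hx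
    rw [Set.mem_singleton_iff] at hz
    subst hz
    have : εB ≤ y := csInf_le hBcp.bddBelow hy
    simpa using this
  have hopS : 0 ≤ S - algebraMap ℝ (H →L[ℂ] H) (εA + εB) := by
    have h := add_nonneg hopA hopB
    have heq : A - algebraMap ℝ (H →L[ℂ] H) εA + (B - algebraMap ℝ (H →L[ℂ] H) εB)
        = S - algebraMap ℝ (H →L[ℂ] H) (εA + εB) := by
      rw [map_add, hSdef]; abel
    rwa [heq] at h
  -- spectrum of S is bounded below by εA + εB > 0
  have hσS : ∀ s ∈ spectrum ℝ S, εA + εB ≤ s := by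
    intro s hs
    have h := (StarOrderedRing.nonneg_iff_spectrum_nonneg (R := ℝ) _
      (hSsa.sub (IsSelfAdjoint.algebraMap _ (.all (εA + εB))))).mp hopS
    have hmem : s - (εA + εB) ∈ spectrum ℝ (S - algebraMap ℝ (H →L[ℂ] H) (εA + εB)) := by
      rw [hspec_sub]
      exact Set.sub_mem_sub hs rfl
    have := h _ hmem
    linarith
  have hσS_pos : spectrum ℝ S ⊆ Set.Ioi 0 := fun s hs =>
    Set.mem_Ioi.mpr (lt_of_lt_of_le (by linarith) (hσS s hs))
  -- spectrum of C
  have hσC : spectrum ℝ C = (2⁻¹ : ℝ) • spectrum ℝ S := spectrum.smul_eq_smul _ _ hSne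
  have hσC_pos : spectrum ℝ C ⊆ Set.Ioi 0 := by
    rw [hσC]
    rintro u ⟨s, hs, rfl⟩
    have := hσS_pos hs
    simp only [smul_eq_mul, Set.mem_Ioi] at *
    linarith
  have hCne : (spectrum ℝ C).Nonempty := by
    rw [hσC]; exact hSne.smul_set
  set m : ℝ := sInf (spectrum ℝ C) with hm_def
  set M : ℝ := sSup (spectrum ℝ C) with hM_def
  have hm_mem : m ∈ spectrum ℝ C := hCcp.sInf_mem hCne
  have hm_pos : 0 < m := hσC_pos hm_mem
  have hmM : m ≤ M := csInf_le_csSup hCne hCcp.bddBelow hCcp.bddAbove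
  -- the chord
  have hdiff : ∀ x : ℝ, 0 < x → DifferentiableAt ℝ f x := fun x hx =>
    (Real.hasDerivAt_rpow_const (Or.inl (ne_of_gt hx))).differentiableAt
  obtain ⟨α, β, hin, hout⟩ := chord_bound_aux (rpow_convexOn_aux hr) hdiff hm_pos hmM
  -- continuity of f on positive sets
  have hcont : ∀ s : Set ℝ, s ⊆ Set.Ioi 0 → ContinuousOn f s := fun s hs x hx =>
    (Real.continuousAt_rpow_const x r (Or.inl (ne_of_gt (hs hx)))).continuousWithinAt
  have hfA : ContinuousOn f (spectrum ℝ A) := hcont _ hA'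
  have hfB : ContinuousOn f (spectrum ℝ B) := hcont _ hB'
  have hfS : ContinuousOn f (spectrum ℝ S) := hcont _ hσS_pos
  -- the chord is below f on the spectra of A and B
  have houtside : ∀ (X : H →L[ℂ] H), spectrum ℝ X ⊆ Set.Ioi 0 →
      IsCompact (spectrum ℝ X) →
      (Set.Icc (sInf (spectrum ℝ X)) (sSup (spectrum ℝ X)) ∩ Set.Icc m M = ∅) →
      ∀ x ∈ spectrum ℝ X, α + β * x ≤ f x := by
    intro X hX' hXcp hdis x hx
    have hxτ : x ∈ Set.Icc (sInf (spectrum ℝ X)) (sSup (spectrum ℝ X)) :=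
      ⟨csInf_le hXcp.bddBelow hx, le_csSup hXcp.bddAbove hx⟩
    have hxI : x ∉ Set.Icc m M := fun hmem =>
      (Set.eq_empty_iff_forall_notMem.mp hdis x) ⟨hxτ, hmem⟩
    exact hout x (hX' hx) hxI
  have hA_chord := houtside A hA' hAcp hdis₁
  have hB_chord := houtside B hB' hBcp hdis₂
  -- operator inequalities for A and B
  have hA_le : algebraMap ℝ (H →L[ℂ] H) α + β • A ≤ cfc f A := by
    have h := cfc_mono (a := A) (f := fun t => α + β * t) (g := f) hA_chord (by fun_prop) hfA
    rwa [cfc_const_add α (fun t => β * t) A (by fun_prop) hA, cfc_const_mul_id β A hA] at h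
  have hB_le : algebraMap ℝ (H →L[ℂ] H) α + β • B ≤ cfc f B := by
    have h := cfc_mono (a := B) (f := fun t => α + β * t) (g := f) hB_chord (by fun_prop) hfB
    rwa [cfc_const_add α (fun t => β * t) B (by fun_prop) hB, cfc_const_mul_id β B hB] at h
  -- scalar inequality on the spectrum of S
  have hS_scalar : ∀ s ∈ spectrum ℝ S, (2:ℝ) ^ (1 - r) * f s ≤ 2 * α + β * s := by
    intro s hs
    have hs_pos : 0 < s := hσS_pos hs
    set u : ℝ := 2⁻¹ * s with hu_def
    have hu_pos : 0 < u := by rw [hu_def]; positivity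
    have hu_mem : u ∈ spectrum ℝ C := by
      rw [hσC]
      exact ⟨s, hs, rfl⟩
    have hu_Icc : u ∈ Set.Icc m M :=
      ⟨csInf_le hCcp.bddBelow hu_mem, le_csSup hCcp.bddAbove hu_mem⟩
    have hchord := hin u hu_Icc
    have hs_eq : s = 2 * u := by rw [hu_def]; ring
    have hfs : f s = 2 ^ r * f u := by
      rw [hfdef, hs_eq]
      simp only []
      rw [Real.mul_rpow (by norm_num) hu_pos.le]
    have hpow : (2:ℝ) ^ (1 - r) * 2 ^ r = 2 := by
      rw [← Real.rpow_add (by norm_num : (0:ℝ) < 2)]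
      norm_num
    calc (2:ℝ) ^ (1 - r) * f s = ((2:ℝ) ^ (1 - r) * 2 ^ r) * f u := by rw [hfs]; ring
      _ = 2 * f u := by rw [hpow]
      _ ≤ 2 * (α + β * u) := by linarith
      _ = 2 * α + β * s := by rw [hs_eq]; ring
  -- put everything together
  calc ((2 : ℝ) ^ (1 - r)) • cfc f S
      = cfc (fun t => (2:ℝ) ^ (1 - r) * f t) S := (cfc_const_mul _ f S hfS).symm
    _ ≤ cfc (fun t => 2 * α + β * t) S :=
        cfc_mono hS_scalar (continuousOn_const.mul hfS) (by fun_prop)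
    _ = algebraMap ℝ (H →L[ℂ] H) (2 * α) + β • S := by
        rw [cfc_const_add (2 * α) (fun t => β * t) S (by fun_prop) hSsa,
          cfc_const_mul_id β S hSsa]
    _ = (algebraMap ℝ (H →L[ℂ] H) α + β • A) + (algebraMap ℝ (H →L[ℂ] H) α + β • B) := by
        rw [two_mul, map_add, hSdef, smul_add]; abel
    _ ≤ cfc f A + cfc f B := add_le_add hA_le hB_le
end

section
/- Let f be a positive operator convex function on [m,M] ⊂ (0,∞), let A₁,…,Aₙ be self-adjoint operators with spectra in [m,M], and w₁,…,wₙ positive reals with Σ wᵢ = 1. Then Σᵢ wᵢ f(Aᵢ) ≤ K(m,M,f) · f(Σᵢ wᵢ Aᵢ), where K(m,M,f) = max over t ∈ [m,M] of (1/f(t))·( ((M-t)/(M-m)) f(m) + ((t-m)/(M-m)) f(M) ). -/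
set_option maxHeartbeats 1000000 in
set_option synthInstance.maxHeartbeats 1000000 in
/-- Mond–Pečarić reverse Jensen inequality for a positive operator convex
function on `[m,M]`. -/
theorem mond_pecaric_operator_convex
    {H : Type*} [NormedAddCommGroup H] [InnerProductSpace ℂ H] [CompleteSpace H]
    (m M : ℝ) (hm : 0 < m) (hmM : m < M)
    (f : ℝ → ℝ) (hfc : ContinuousOn f (Set.Icc m M))
    (hfpos : ∀ t ∈ Set.Icc m M, 0 < f t)
    (hfopconv : ∀ (X Y : H →L[ℂ] H), IsSelfAdjoint X → IsSelfAdjoint Y →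
      spectrum ℝ X ⊆ Set.Icc m M → spectrum ℝ Y ⊆ Set.Icc m M →
      ∀ v ∈ Set.Icc (0 : ℝ) 1,
        cfc f ((1 - v) • X + v • Y) ≤ (1 - v) • cfc f X + v • cfc f Y)
    (k : ℕ) (A : Fin k → H →L[ℂ] H) (w : Fin k → ℝ)
    (hAsa : ∀ i, IsSelfAdjoint (A i)) (hAsp : ∀ i, spectrum ℝ (A i) ⊆ Set.Icc m M)
    (hw : ∀ i, 0 < w i) (hw1 : ∑ i, w i = 1)
    (K : ℝ)
    (hK : IsGreatest ((fun t => (((M - t) / (M - m)) * f m + ((t - m) / (M - m)) * f M) / f t) ''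
      Set.Icc m M) K) :
    ∑ i, w i • cfc f (A i) ≤ K • cfc f (∑ i, w i • A i) := by
  rcases subsingleton_or_nontrivial H with hsub | hnt
  · exact le_of_eq (ContinuousLinearMap.ext fun x => Subsingleton.elim _ _)
  haveI : Nontrivial (H →L[ℂ] H) := by
    refine ⟨1, 0, fun h => ?_⟩
    obtain ⟨x, hx⟩ := exists_ne (0 : H)
    exact hx (by simpa using DFunLike.congr_fun h x)
  have hMm : (0:ℝ) < M - m := sub_pos.mpr hmM
  set g : ℝ → ℝ := fun t => ((M - t) / (M - m)) * f m + ((t - m) / (M - m)) * f M with hgdef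
  set a : ℝ := (M * f m - m * f M) / (M - m) with ha
  set b : ℝ := (f M - f m) / (M - m) with hb
  have hgfun : g = fun t => a + b * t := by
    funext t
    rw [hgdef, ha, hb]
    field_simp
    ring
  have hg_cont : Continuous g := by rw [hgfun]; fun_prop
  have hsa1 : ∀ r : ℝ, IsSelfAdjoint (algebraMap ℝ (H →L[ℂ] H) r) := fun r => by
    rw [Algebra.algebraMap_eq_smul_one]
    exact (IsSelfAdjoint.all r).smul (.one _)
  have hspec1 : ∀ r : ℝ, spectrum ℝ (algebraMap ℝ (H →L[ℂ] H) r) = {r} := fun r =>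
    spectrum.scalar_eq r
  -- scalar bound : f ≤ g on [m, M]
  have hconv : ∀ t ∈ Set.Icc m M, f t ≤ g t := by
    intro t ht
    set v : ℝ := (t - m) / (M - m) with hv
    have hv01 : v ∈ Set.Icc (0:ℝ) 1 :=
      ⟨div_nonneg (by linarith [ht.1]) hMm.le, (div_le_one hMm).mpr (by linarith [ht.2])⟩
    have h := hfopconv (algebraMap ℝ _ m) (algebraMap ℝ _ M) (hsa1 m) (hsa1 M)
      (by rw [hspec1]; exact Set.singleton_subset_iff.mpr ⟨le_refl m, hmM.le⟩)
      (by rw [hspec1]; exact Set.singleton_subset_iff.mpr ⟨hmM.le, le_refl M⟩) v hv01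
    have hcomb : (1 - v) • (algebraMap ℝ (H →L[ℂ] H) m) + v • algebraMap ℝ (H →L[ℂ] H) M
        = algebraMap ℝ (H →L[ℂ] H) t := by
      simp only [Algebra.algebraMap_eq_smul_one, smul_smul, ← add_smul]
      congr 1
      rw [hv]; field_simp; ring
    rw [hcomb, cfc_algebraMap, cfc_algebraMap, cfc_algebraMap] at h
    have hcomb2 : (1 - v) • (algebraMap ℝ (H →L[ℂ] H) (f m)) + v • algebraMap ℝ (H →L[ℂ] H) (f M)
        = algebraMap ℝ (H →L[ℂ] H) ((1 - v) * f m + v * f M) := by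
      simp only [Algebra.algebraMap_eq_smul_one, smul_smul, ← add_smul]
    rw [hcomb2] at h
    have hle : f t ≤ (1 - v) * f m + v * f M := by
      have h2 := (le_algebraMap_iff_spectrum_le (r := (1 - v) * f m + v * f M)
        (a := algebraMap ℝ (H →L[ℂ] H) (f t)) (hsa1 _)).mp h
      exact h2 (f t) (by simp [hspec1])
    calc f t ≤ (1 - v) * f m + v * f M := hle
      _ = g t := by rw [hgdef, hv]; field_simp; ring
  -- the averaged operator
  set B : H →L[ℂ] H := ∑ i, w i • A i with hB
  have hBsa : IsSelfAdjoint B := by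
    rw [hB, IsSelfAdjoint, star_sum]
    exact Finset.sum_congr rfl fun i _ => by
      rw [star_smul, star_trivial, (hAsa i).star_eq]
  have hA_lb : ∀ i, algebraMap ℝ (H →L[ℂ] H) m ≤ A i := fun i =>
    (algebraMap_le_iff_le_spectrum (hAsa i)).mpr fun x hx => (hAsp i hx).1
  have hA_ub : ∀ i, A i ≤ algebraMap ℝ (H →L[ℂ] H) M := fun i =>
    (le_algebraMap_iff_spectrum_le (hAsa i)).mpr fun x hx => (hAsp i hx).2
  have hB_lb : algebraMap ℝ (H →L[ℂ] H) m ≤ B := by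
    calc algebraMap ℝ (H →L[ℂ] H) m = ∑ i, w i • algebraMap ℝ (H →L[ℂ] H) m := by
          rw [← Finset.sum_smul, hw1, one_smul]
      _ ≤ ∑ i, w i • A i :=
          Finset.sum_le_sum fun i _ => smul_le_smul_of_nonneg_left (hA_lb i) (hw i).le
  have hB_ub : B ≤ algebraMap ℝ (H →L[ℂ] H) M := by
    calc B = ∑ i, w i • A i := hB
      _ ≤ ∑ i, w i • algebraMap ℝ (H →L[ℂ] H) M :=
          Finset.sum_le_sum fun i _ => smul_le_smul_of_nonneg_left (hA_ub i) (hw i).le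
      _ = algebraMap ℝ (H →L[ℂ] H) M := by rw [← Finset.sum_smul, hw1, one_smul]
  have hBsp : spectrum ℝ B ⊆ Set.Icc m M := fun x hx =>
    ⟨(algebraMap_le_iff_le_spectrum hBsa).mp hB_lb x hx,
     (le_algebraMap_iff_spectrum_le hBsa).mp hB_ub x hx⟩
  -- cfc of the affine function g
  have hcfc_g : ∀ (X : H →L[ℂ] H), IsSelfAdjoint X →
      cfc g X = algebraMap ℝ (H →L[ℂ] H) a + b • X := by
    intro X hX
    rw [hgfun]
    rw [cfc_const_add a (fun t => b * t) X (by fun_prop) hX, cfc_const_mul_id b X hX]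
  -- main chain
  have step1 : ∑ i, w i • cfc f (A i) ≤ ∑ i, w i • cfc g (A i) :=
    Finset.sum_le_sum fun i _ => smul_le_smul_of_nonneg_left
      (cfc_mono (fun x hx => hconv x (hAsp i hx)) (hfc.mono (hAsp i))
        (hg_cont.continuousOn)) (hw i).le
  have step2 : ∑ i, w i • cfc g (A i) = cfc g B := by
    calc ∑ i, w i • cfc g (A i)
        = ∑ i, (w i • algebraMap ℝ (H →L[ℂ] H) a + w i • b • A i) := by
          refine Finset.sum_congr rfl fun i _ => ?_
          rw [hcfc_g (A i) (hAsa i), smul_add]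
      _ = (∑ i, w i) • algebraMap ℝ (H →L[ℂ] H) a + b • ∑ i, w i • A i := by
          rw [Finset.sum_add_distrib, ← Finset.sum_smul, Finset.smul_sum]
          congr 1
          exact Finset.sum_congr rfl fun i _ => smul_comm _ _ _
      _ = cfc g B := by rw [hw1, one_smul, hcfc_g B hBsa, hB]
  have step3 : cfc g B ≤ cfc (fun t => K * f t) B := by
    refine cfc_mono (fun x hx => ?_) (hg_cont.continuousOn)
      (continuousOn_const.mul (hfc.mono hBsp))
    have hmem : g x / f x ∈ ((fun t => (((M - t) / (M - m)) * f m + ((t - m) / (M - m)) * f M)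
        / f t) '' Set.Icc m M) := ⟨x, hBsp hx, rfl⟩
    have hub := hK.2 hmem
    exact (div_le_iff₀ (hfpos x (hBsp hx))).mp hub
  have step4 : cfc (fun t => K * f t) B = K • cfc f B :=
    cfc_const_mul K f B (hfc.mono hBsp)
  calc ∑ i, w i • cfc f (A i) ≤ ∑ i, w i • cfc g (A i) := step1
    _ = cfc g B := step2
    _ ≤ cfc (fun t => K * f t) B := step3
    _ = K • cfc f B := step4
end

section
/- Let A, B be positive operators with n ≤ A, B ≤ N, let f : (0,∞) → (0,∞) be an operator concave function, and suppose 0 < m ≤ 2n ≤ 2N ≤ M. Then k(m,M,f) · f(A+B) ≤ f(A) + f(B), where k(m,M,f) = min_{t∈[m,M]} (1/f(t))·( ((M-t)/(M-m)) f(m) + ((t-m)/(M-m)) f(M) ). -/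
set_option maxHeartbeats 1000000
set_option synthInstance.maxHeartbeats 200000


/-- subadditivity estimate `k(m,M,f) f(A+B) ≤ f(A)+f(B)` for a strictly
positive operator concave function `f` on `(0,∞)`. -/
theorem subadditivity_op_concave
    {H : Type*} [NormedAddCommGroup H] [InnerProductSpace ℂ H] [CompleteSpace H]
    (A B : H →L[ℂ] H) (hA : IsSelfAdjoint A) (hB : IsSelfAdjoint B)
    (n N m M : ℝ) (hm : 0 < m) (hm2n : m ≤ 2 * n) (hnN : n ≤ N) (hNM : 2 * N ≤ M)
    (hA₁ : n • (1 : H →L[ℂ] H) ≤ A) (hA₂ : A ≤ N • (1 : H →L[ℂ] H))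
    (hB₁ : n • (1 : H →L[ℂ] H) ≤ B) (hB₂ : B ≤ N • (1 : H →L[ℂ] H))
    (f : ℝ → ℝ) (hfc : ContinuousOn f (Set.Ioi 0)) (hfpos : ∀ t ∈ Set.Ioi (0 : ℝ), 0 < f t)
    (hfopconc : ∀ (X Y : H →L[ℂ] H), IsSelfAdjoint X → IsSelfAdjoint Y →
      spectrum ℝ X ⊆ Set.Ioi 0 → spectrum ℝ Y ⊆ Set.Ioi 0 →
      ∀ v ∈ Set.Icc (0 : ℝ) 1,
        (1 - v) • cfc f X + v • cfc f Y ≤ cfc f ((1 - v) • X + v • Y))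
    (k : ℝ)
    (hk : IsLeast ((fun t => (((M - t) / (M - m)) * f m + ((t - m) / (M - m)) * f M) / f t) ''
      Set.Icc m M) k) :
    k • cfc f (A + B) ≤ cfc f A + cfc f B := by
  have hn : 0 < n := by linarith
  have hmM : m ≤ M := by linarith
  -- trivial Hilbert space case
  rcases subsingleton_or_nontrivial H with hH | hH
  · haveI : Subsingleton (H →L[ℂ] H) := ⟨fun a b => by ext x; exact Subsingleton.elim _ _⟩
    exact le_of_eq (Subsingleton.elim _ _)
  haveI : Nontrivial (H →L[ℂ] H) := by
    obtain ⟨x, hx⟩ := exists_ne (0 : H)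
    exact ⟨1, 0, fun h => hx (by simpa using DFunLike.congr_fun h x)⟩
  -- spectra bounds
  have hA₁' : algebraMap ℝ (H →L[ℂ] H) n ≤ A := by rwa [Algebra.algebraMap_eq_smul_one]
  have hA₂' : A ≤ algebraMap ℝ (H →L[ℂ] H) N := by rwa [Algebra.algebraMap_eq_smul_one]
  have hB₁' : algebraMap ℝ (H →L[ℂ] H) n ≤ B := by rwa [Algebra.algebraMap_eq_smul_one]
  have hB₂' : B ≤ algebraMap ℝ (H →L[ℂ] H) N := by rwa [Algebra.algebraMap_eq_smul_one]
  have specA : spectrum ℝ A ⊆ Set.Icc n N := fun x hx =>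
    ⟨(algebraMap_le_iff_le_spectrum hA).mp hA₁' x hx,
     (le_algebraMap_iff_spectrum_le hA).mp hA₂' x hx⟩
  have specB : spectrum ℝ B ⊆ Set.Icc n N := fun x hx =>
    ⟨(algebraMap_le_iff_le_spectrum hB).mp hB₁' x hx,
     (le_algebraMap_iff_spectrum_le hB).mp hB₂' x hx⟩
  have specApos : spectrum ℝ A ⊆ Set.Ioi 0 := fun x hx => lt_of_lt_of_le hn (specA hx).1
  have specBpos : spectrum ℝ B ⊆ Set.Ioi 0 := fun x hx => lt_of_lt_of_le hn (specB hx).1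
  have hC : IsSelfAdjoint (A + B) := hA.add hB
  have hC₁ : algebraMap ℝ (H →L[ℂ] H) (2 * n) ≤ A + B := by
    rw [Algebra.algebraMap_eq_smul_one, two_mul, add_smul]
    exact add_le_add hA₁ hB₁
  have hC₂ : A + B ≤ algebraMap ℝ (H →L[ℂ] H) (2 * N) := by
    rw [Algebra.algebraMap_eq_smul_one, two_mul, add_smul]
    exact add_le_add hA₂ hB₂
  have specC : spectrum ℝ (A + B) ⊆ Set.Icc (2 * n) (2 * N) := fun x hx =>
    ⟨(algebraMap_le_iff_le_spectrum hC).mp hC₁ x hx,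
     (le_algebraMap_iff_spectrum_le hC).mp hC₂ x hx⟩
  have specCmM : spectrum ℝ (A + B) ⊆ Set.Icc m M := fun x hx =>
    ⟨le_trans hm2n (specC hx).1, le_trans (specC hx).2 hNM⟩
  have specCpos : spectrum ℝ (A + B) ⊆ Set.Ioi 0 := fun x hx =>
    lt_of_lt_of_le hm (specCmM hx).1
  have hfA : ContinuousOn f (spectrum ℝ A) := hfc.mono specApos
  have hfB : ContinuousOn f (spectrum ℝ B) := hfc.mono specBpos
  have hfCc : ContinuousOn f (spectrum ℝ (A + B)) := hfc.mono specCpos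
  -- degenerate case m = M
  rcases eq_or_lt_of_le hmM with hmM' | hmM'
  · have hk0 : k = 0 := by
      obtain ⟨t, ht, hkt⟩ := hk.1
      rw [← hmM', Set.Icc_self, Set.mem_singleton_iff] at ht
      subst ht
      rw [← hkt, ← hmM']
      simp
    rw [hk0, zero_smul]
    exact add_nonneg (cfc_nonneg fun x hx => (hfpos x (specApos hx)).le)
      (cfc_nonneg fun x hx => (hfpos x (specBpos hx)).le)
  have hMm : 0 < M - m := by linarith
  -- scalar concavity extracted from operator concavity
  have hconc : ∀ s t v : ℝ, 0 < s → 0 < t → 0 ≤ v → v ≤ 1 →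
      (1 - v) * f s + v * f t ≤ f ((1 - v) * s + v * t) := by
    intro s t v hs ht hv0 hv1
    have hsa : IsSelfAdjoint (algebraMap ℝ (H →L[ℂ] H) s) := IsSelfAdjoint.algebraMap (A := H →L[ℂ] H) (IsSelfAdjoint.all s)
    have hta : IsSelfAdjoint (algebraMap ℝ (H →L[ℂ] H) t) := IsSelfAdjoint.algebraMap (A := H →L[ℂ] H) (IsSelfAdjoint.all t)
    have hss : spectrum ℝ (algebraMap ℝ (H →L[ℂ] H) s) ⊆ Set.Ioi 0 := by
      rw [CFC.spectrum_algebraMap_eq]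
      exact Set.singleton_subset_iff.mpr hs
    have hts : spectrum ℝ (algebraMap ℝ (H →L[ℂ] H) t) ⊆ Set.Ioi 0 := by
      rw [CFC.spectrum_algebraMap_eq]
      exact Set.singleton_subset_iff.mpr ht
    have h := hfopconc _ _ hsa hta hss hts v ⟨hv0, hv1⟩
    rw [cfc_algebraMap, cfc_algebraMap] at h
    have e1 : (1 - v) • algebraMap ℝ (H →L[ℂ] H) s + v • algebraMap ℝ (H →L[ℂ] H) t
        = algebraMap ℝ (H →L[ℂ] H) ((1 - v) * s + v * t) := by
      rw [Algebra.algebraMap_eq_smul_one, Algebra.algebraMap_eq_smul_one,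
        Algebra.algebraMap_eq_smul_one, smul_smul, smul_smul, add_smul]
    have e2 : (1 - v) • algebraMap ℝ (H →L[ℂ] H) (f s) + v • algebraMap ℝ (H →L[ℂ] H) (f t)
        = algebraMap ℝ (H →L[ℂ] H) ((1 - v) * f s + v * f t) := by
      rw [Algebra.algebraMap_eq_smul_one, Algebra.algebraMap_eq_smul_one,
        Algebra.algebraMap_eq_smul_one, smul_smul, smul_smul, add_smul]
    rw [e1, e2, cfc_algebraMap] at h
    have hsa' : IsSelfAdjoint (algebraMap ℝ (H →L[ℂ] H) (f ((1 - v) * s + v * t))) :=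
      IsSelfAdjoint.algebraMap (A := H →L[ℂ] H) (IsSelfAdjoint.all _)
    have := (algebraMap_le_iff_le_spectrum hsa').mp h
    exact this _ (by rw [CFC.spectrum_algebraMap_eq]; exact rfl)
  -- f t ≤ 2 f(t/2)
  have key : ∀ t : ℝ, 0 < t → f t ≤ 2 * f (t / 2) := by
    intro t ht
    have ht2 : 0 < t / 2 := by linarith
    have hev : ∀ᶠ δ in nhdsWithin 0 (Set.Ioi 0),
        f t ≤ (t - δ) / (t / 2 - δ) * f (t / 2) := by
      filter_upwards [Ioo_mem_nhdsGT_of_mem (Set.left_mem_Ico.mpr ht2)] with δ hδ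
      obtain ⟨hδ0, hδ2⟩ := hδ
      have htδ : 0 < t - δ := by linarith
      have ht2δ : 0 < t / 2 - δ := by linarith
      set v := (t / 2) / (t - δ) with hv
      have hv0 : 0 ≤ v := by positivity
      have hv1 : v ≤ 1 := by rw [hv, div_le_one htδ]; linarith
      have hcomb : (1 - v) * t + v * δ = t / 2 := by
        rw [hv]
        field_simp [hv]
        ring
      have h := hconc t δ v ht hδ0 hv0 hv1
      rw [hcomb] at h
      have hfδ : 0 ≤ v * f δ := mul_nonneg hv0 (hfpos δ hδ0).le
      have h2 : (1 - v) * f t ≤ f (t / 2) := by linarith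
      have h1v : 1 - v = (t / 2 - δ) / (t - δ) := by
        rw [hv]
        field_simp
        ring
      rw [h1v, div_mul_eq_mul_div, div_le_iff₀ htδ] at h2
      rw [div_mul_eq_mul_div, le_div_iff₀ ht2δ]
      nlinarith [hfpos t ht, hfpos (t / 2) ht2]
    have hlim : Filter.Tendsto (fun δ : ℝ => (t - δ) / (t / 2 - δ) * f (t / 2))
        (nhdsWithin 0 (Set.Ioi 0)) (nhds (2 * f (t / 2))) := by
      have h1 : Filter.Tendsto (fun δ : ℝ => (t - δ) / (t / 2 - δ) * f (t / 2)) (nhds 0)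
          (nhds ((t - 0) / (t / 2 - 0) * f (t / 2))) := by
        apply Filter.Tendsto.mul_const
        exact (tendsto_const_nhds.sub Filter.tendsto_id).div (tendsto_const_nhds.sub Filter.tendsto_id)
          (by simpa using ht2.ne')
      have h20 : (t - 0) / (t / 2 - 0) * f (t / 2) = 2 * f (t / 2) := by
        rw [sub_zero, sub_zero]
        congr 1
        field_simp
      rw [h20] at h1
      exact h1.mono_left nhdsWithin_le_nhds
    exact ge_of_tendsto hlim hev
  -- the chord
  set a : ℝ := (M * f m - m * f M) / (M - m) with ha_def
  set b : ℝ := (f M - f m) / (M - m) with hb_def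
  have chord : ∀ s : ℝ, m ≤ s → s ≤ M → a + b * s ≤ f s := by
    intro s h1 h2
    set v := (s - m) / (M - m) with hv
    have hv0 : 0 ≤ v := div_nonneg (by linarith) hMm.le
    have hv1 : v ≤ 1 := by rw [hv, div_le_one hMm]; linarith
    have hcomb : (1 - v) * m + v * M = s := by
      rw [hv]
      field_simp [hv]
      ring
    have h := hconc m M v hm (lt_of_lt_of_le hm hmM) hv0 hv1
    rw [hcomb] at h
    have : (1 - v) * f m + v * f M = a + b * s := by
      rw [hv, ha_def, hb_def]
      field_simp
      ring
    linarith
  -- k f ≤ chord on spectrum of A+B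
  have kfle : ∀ s ∈ spectrum ℝ (A + B), k * f s ≤ a + b * s := by
    intro s hs
    obtain ⟨hs1, hs2⟩ := specCmM hs
    have hfs : 0 < f s := hfpos s (specCpos hs)
    have hks : k ≤ (((M - s) / (M - m)) * f m + ((s - m) / (M - m)) * f M) / f s :=
      hk.2 ⟨s, ⟨hs1, hs2⟩, rfl⟩
    rw [le_div_iff₀ hfs] at hks
    calc k * f s ≤ ((M - s) / (M - m)) * f m + ((s - m) / (M - m)) * f M := hks
      _ = a + b * s := by
          rw [ha_def, hb_def]
          field_simp
          ring
  -- half-chord below f on spectra of A and B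
  have fboundA : ∀ x ∈ spectrum ℝ A, a / 2 + b * x ≤ f x := by
    intro x hx
    obtain ⟨hx1, hx2⟩ := specA hx
    have hx0 : 0 < x := lt_of_lt_of_le hn hx1
    have hch := chord (2 * x) (by linarith) (by linarith)
    have hkey := key (2 * x) (by linarith)
    rw [show (2 * x) / 2 = x by ring] at hkey
    linarith
  have fboundB : ∀ x ∈ spectrum ℝ B, a / 2 + b * x ≤ f x := by
    intro x hx
    obtain ⟨hx1, hx2⟩ := specB hx
    have hx0 : 0 < x := lt_of_lt_of_le hn hx1
    have hch := chord (2 * x) (by linarith) (by linarith)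
    have hkey := key (2 * x) (by linarith)
    rw [show (2 * x) / 2 = x by ring] at hkey
    linarith
  -- operator-level assembly
  have hcontaff : ∀ (c d : ℝ) (s : Set ℝ), ContinuousOn (fun x : ℝ => c + d * x) s :=
    fun c d s => (continuous_const.add (continuous_const.mul continuous_id)).continuousOn
  have hAineq : cfc (fun x : ℝ => a / 2 + b * x) A ≤ cfc f A :=
    cfc_mono fboundA (hcontaff _ _ _) hfA
  have hBineq : cfc (fun x : ℝ => a / 2 + b * x) B ≤ cfc f B :=
    cfc_mono fboundB (hcontaff _ _ _) hfB
  have hAeq : cfc (fun x : ℝ => a / 2 + b * x) A = (a / 2) • (1 : H →L[ℂ] H) + b • A := by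
    rw [cfc_const_add (a / 2) (fun x : ℝ => b * x) A
        ((continuous_const.mul continuous_id).continuousOn) hA,
      cfc_const_mul_id b A hA, Algebra.algebraMap_eq_smul_one]
  have hBeq : cfc (fun x : ℝ => a / 2 + b * x) B = (a / 2) • (1 : H →L[ℂ] H) + b • B := by
    rw [cfc_const_add (a / 2) (fun x : ℝ => b * x) B
        ((continuous_const.mul continuous_id).continuousOn) hB,
      cfc_const_mul_id b B hB, Algebra.algebraMap_eq_smul_one]
  have hCeq : cfc (fun x : ℝ => a + b * x) (A + B)
      = a • (1 : H →L[ℂ] H) + b • (A + B) := by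
    rw [cfc_const_add a (fun x : ℝ => b * x) (A + B)
        ((continuous_const.mul continuous_id).continuousOn) hC,
      cfc_const_mul_id b (A + B) hC, Algebra.algebraMap_eq_smul_one]
  have hmain : k • cfc f (A + B) ≤ cfc (fun x : ℝ => a + b * x) (A + B) := by
    rw [← cfc_const_mul k f (A + B) hfCc]
    exact cfc_mono kfle (continuousOn_const.mul hfCc) (hcontaff _ _ _)
  calc k • cfc f (A + B) ≤ cfc (fun x : ℝ => a + b * x) (A + B) := hmain
    _ = ((a / 2) • (1 : H →L[ℂ] H) + b • A) + ((a / 2) • (1 : H →L[ℂ] H) + b • B) := by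
        rw [hCeq]
        module
    _ ≤ cfc f A + cfc f B := by
        rw [← hAeq, ← hBeq]
        exact add_le_add hAineq hBineq
end

section
/- Let f be a positive operator concave function on [m,M], A₁,…,Aₙ self-adjoint with spectra in [m,M], and w₁,…,wₙ positive reals summing to 1. Then f(Σᵢ wᵢ Aᵢ) ≤ (1/k(m,M,f)) · Σᵢ wᵢ f(Aᵢ), where k(m,M,f) = min_{t∈[m,M]} (1/f(t))·( ((M-t)/(M-m)) f(m) + ((t-m)/(M-m)) f(M) ). -/
set_option maxHeartbeats 1000000
set_option synthInstance.maxHeartbeats 1000000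


/-- Mond–Pečarić type inequality for a positive operator concave function
on `[m,M]`. -/
theorem mond_pecaric_operator_concave
    {H : Type*} [NormedAddCommGroup H] [InnerProductSpace ℂ H] [CompleteSpace H]
    (m M : ℝ) (hm : 0 < m) (hmM : m < M)
    (f : ℝ → ℝ) (hfc : ContinuousOn f (Set.Icc m M))
    (hfpos : ∀ t ∈ Set.Icc m M, 0 < f t)
    (hfopconc : ∀ (X Y : H →L[ℂ] H), IsSelfAdjoint X → IsSelfAdjoint Y →
      spectrum ℝ X ⊆ Set.Icc m M → spectrum ℝ Y ⊆ Set.Icc m M →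
      ∀ v ∈ Set.Icc (0 : ℝ) 1,
        (1 - v) • cfc f X + v • cfc f Y ≤ cfc f ((1 - v) • X + v • Y))
    (n : ℕ) (A : Fin n → H →L[ℂ] H) (w : Fin n → ℝ)
    (hAsa : ∀ i, IsSelfAdjoint (A i)) (hAsp : ∀ i, spectrum ℝ (A i) ⊆ Set.Icc m M)
    (hw : ∀ i, 0 < w i) (hw1 : ∑ i, w i = 1)
    (k : ℝ)
    (hk : IsLeast ((fun t => (((M - t) / (M - m)) * f m + ((t - m) / (M - m)) * f M) / f t) ''
      Set.Icc m M) k) :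
    cfc f (∑ i, w i • A i) ≤ k⁻¹ • ∑ i, w i • cfc f (A i) := by
  have hMm : (0:ℝ) < M - m := sub_pos.mpr hmM
  set a : ℝ := (M * f m - m * f M) / (M - m) with ha
  set b : ℝ := (f M - f m) / (M - m) with hb
  have hLform : ∀ t : ℝ, ((M - t) / (M - m)) * f m + ((t - m) / (M - m)) * f M = a + b * t := by
    intro t; rw [ha, hb]; field_simp; ring
  -- positivity of L on [m,M]
  have hLpos : ∀ t ∈ Set.Icc m M, 0 < a + b * t := by
    intro t ht
    rw [← hLform]
    obtain ⟨h1, h2⟩ := ht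
    have hfm := hfpos m (Set.left_mem_Icc.mpr hmM.le)
    have hfM := hfpos M (Set.right_mem_Icc.mpr hmM.le)
    rcases lt_or_eq_of_le h2 with h | h
    · exact add_pos_of_pos_of_nonneg
        (mul_pos (div_pos (sub_pos.mpr h) hMm) hfm)
        (mul_nonneg (div_nonneg (sub_nonneg.mpr h1) hMm.le) hfM.le)
    · subst h
      simp only [sub_self, zero_div, zero_mul, zero_add, div_self hMm.ne']
      linarith
  -- k is positive
  have hkpos : 0 < k := by
    obtain ⟨t₀, ht₀, hkt₀⟩ := hk.1
    rw [← hkt₀]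
    have := hLpos t₀ ht₀
    rw [← hLform t₀] at this
    exact div_pos this (hfpos t₀ ht₀)
  -- k f t ≤ L t on [m,M]
  have hkf : ∀ t ∈ Set.Icc m M, f t ≤ k⁻¹ * (a + b * t) := by
    intro t ht
    have h1 : k ≤ (((M - t) / (M - m)) * f m + ((t - m) / (M - m)) * f M) / f t :=
      hk.2 ⟨t, ht, rfl⟩
    rw [hLform] at h1
    rw [le_div_iff₀ (hfpos t ht)] at h1
    calc f t = k⁻¹ * (k * f t) := by field_simp
    _ ≤ k⁻¹ * (a + b * t) := mul_le_mul_of_nonneg_left h1 (inv_nonneg.mpr hkpos.le)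
  rcases subsingleton_or_nontrivial (H →L[ℂ] H) with hss | hnt
  · exact le_of_eq (Subsingleton.elim _ _)
  -- pointwise concavity: the chord lies below f on [m, M]
  have hconc : ∀ t ∈ Set.Icc m M, a + b * t ≤ f t := by
    intro t ht
    set v : ℝ := (t - m) / (M - m) with hv
    have hv0 : 0 ≤ v := div_nonneg (sub_nonneg.mpr ht.1) hMm.le
    have hv1 : v ≤ 1 := by
      rw [hv, div_le_one hMm]; linarith [ht.2]
    have hXsa : IsSelfAdjoint (algebraMap ℝ (H →L[ℂ] H) m) :=
      IsSelfAdjoint.algebraMap _ (IsSelfAdjoint.all m)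
    have hYsa : IsSelfAdjoint (algebraMap ℝ (H →L[ℂ] H) M) :=
      IsSelfAdjoint.algebraMap _ (IsSelfAdjoint.all M)
    have hXsp : spectrum ℝ (algebraMap ℝ (H →L[ℂ] H) m) ⊆ Set.Icc m M := by
      rw [spectrum.scalar_eq]
      exact Set.singleton_subset_iff.mpr ⟨le_refl m, hmM.le⟩
    have hYsp : spectrum ℝ (algebraMap ℝ (H →L[ℂ] H) M) ⊆ Set.Icc m M := by
      rw [spectrum.scalar_eq]
      exact Set.singleton_subset_iff.mpr ⟨hmM.le, le_refl M⟩
    have key := hfopconc _ _ hXsa hYsa hXsp hYsp v ⟨hv0, hv1⟩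
    have hcomb : (1 - v) • (algebraMap ℝ (H →L[ℂ] H) m) + v • (algebraMap ℝ (H →L[ℂ] H) M)
        = algebraMap ℝ (H →L[ℂ] H) t := by
      simp only [Algebra.algebraMap_eq_smul_one, smul_smul, ← add_smul]
      congr 1
      rw [hv]; field_simp; ring
    rw [hcomb, cfc_algebraMap, cfc_algebraMap, cfc_algebraMap] at key
    have key2 : algebraMap ℝ (H →L[ℂ] H) ((1 - v) * f m + v * f M)
        ≤ algebraMap ℝ (H →L[ℂ] H) (f t) := by
      rw [map_add]
      simpa only [Algebra.algebraMap_eq_smul_one, smul_smul] using key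
    have key3 := (algebraMap_le_iff_le_spectrum
      (a := algebraMap ℝ (H →L[ℂ] H) (f t))
      (IsSelfAdjoint.algebraMap _ (IsSelfAdjoint.all (f t)))).mp key2
    rw [spectrum.scalar_eq] at key3
    have key4 : (1 - v) * f m + v * f M ≤ f t := key3 (f t) rfl
    have hEq : a + b * t = (1 - v) * f m + v * f M := by
      rw [← hLform t, hv]
      congr 2
      field_simp; ring
    linarith [hEq ▸ key4]
  -- the weighted sum B
  set B : H →L[ℂ] H := ∑ i, w i • A i with hB
  have hBsa : IsSelfAdjoint B := by
    rw [hB]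
    have hsm : ∀ i, IsSelfAdjoint (w i • A i) := fun i => by
      rw [IsSelfAdjoint, star_smul, star_trivial, (hAsa i).star_eq]
    exact Finset.sum_induction _ _ (fun x y hx hy => hx.add hy) (.zero _)
      (fun i _ => hsm i)
  have hlow : ∀ i, algebraMap ℝ (H →L[ℂ] H) m ≤ A i := fun i =>
    (algebraMap_le_iff_le_spectrum (hAsa i)).mpr fun x hx => ((hAsp i) hx).1
  have hhigh : ∀ i, A i ≤ algebraMap ℝ (H →L[ℂ] H) M := fun i =>
    (le_algebraMap_iff_spectrum_le (hAsa i)).mpr fun x hx => ((hAsp i) hx).2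
  have hBlow : algebraMap ℝ (H →L[ℂ] H) m ≤ B := by
    calc algebraMap ℝ (H →L[ℂ] H) m = ∑ i, w i • algebraMap ℝ (H →L[ℂ] H) m := by
          rw [← Finset.sum_smul, hw1, one_smul]
    _ ≤ B := Finset.sum_le_sum fun i _ =>
        smul_le_smul_of_nonneg_left (hlow i) (hw i).le
  have hBhigh : B ≤ algebraMap ℝ (H →L[ℂ] H) M := by
    calc B ≤ ∑ i, w i • algebraMap ℝ (H →L[ℂ] H) M := Finset.sum_le_sum fun i _ =>
          smul_le_smul_of_nonneg_left (hhigh i) (hw i).le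
    _ = algebraMap ℝ (H →L[ℂ] H) M := by rw [← Finset.sum_smul, hw1, one_smul]
  have hBsp : spectrum ℝ B ⊆ Set.Icc m M := fun x hx =>
    ⟨(algebraMap_le_iff_le_spectrum hBsa).mp hBlow x hx,
     (le_algebraMap_iff_spectrum_le hBsa).mp hBhigh x hx⟩
  -- Step 1: f(B) ≤ k⁻¹ • L(B)
  have step1 : cfc f B ≤ cfc (fun t => k⁻¹ * (a + b * t)) B := by
    exact cfc_mono (fun x hx => hkf x (hBsp hx)) (hf := hfc.mono hBsp) (hg := by fun_prop)
  -- Step 2: evaluate the affine cfc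
  have haff : ∀ (T : H →L[ℂ] H), IsSelfAdjoint T →
      cfc (fun t : ℝ => a + b * t) T = algebraMap ℝ (H →L[ℂ] H) a + b • T := by
    intro T hT
    rw [cfc_add _ _ _ (by fun_prop) (by fun_prop), cfc_const a T hT,
      cfc_const_mul b _ T (by fun_prop), cfc_id' ℝ T hT]
  have step2 : cfc (fun t : ℝ => k⁻¹ * (a + b * t)) B
      = k⁻¹ • (algebraMap ℝ (H →L[ℂ] H) a + b • B) := by
    rw [cfc_const_mul k⁻¹ _ B (by fun_prop), haff B hBsa]
  -- Step 3: affine decomposition over the convex combination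
  have step3 : algebraMap ℝ (H →L[ℂ] H) a + b • B
      = ∑ i, w i • (algebraMap ℝ (H →L[ℂ] H) a + b • A i) := by
    simp only [smul_add, Finset.sum_add_distrib]
    rw [← Finset.sum_smul, hw1, one_smul, hB, Finset.smul_sum]
    congr 1
    exact Finset.sum_congr rfl fun i _ => (smul_comm (w i) b (A i)) ▸ rfl
  -- Step 4: L(Aᵢ) ≤ f(Aᵢ)
  have step4 : ∀ i, algebraMap ℝ (H →L[ℂ] H) a + b • A i ≤ cfc f (A i) := by
    intro i
    rw [← haff (A i) (hAsa i)]
    exact cfc_mono (fun x hx => hconc x (hAsp i hx)) (hf := by fun_prop) (hg := hfc.mono (hAsp i))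
  -- combine
  calc cfc f B ≤ cfc (fun t : ℝ => k⁻¹ * (a + b * t)) B := step1
  _ = k⁻¹ • ∑ i, w i • (algebraMap ℝ (H →L[ℂ] H) a + b • A i) := by rw [step2, step3]
  _ ≤ k⁻¹ • ∑ i, w i • cfc f (A i) := by
      apply smul_le_smul_of_nonneg_left _ (inv_nonneg.mpr hkpos.le)
      exact Finset.sum_le_sum fun i _ =>
        smul_le_smul_of_nonneg_left (step4 i) (hw i).le
end

section
/- Let A be a self-adjoint operator with m ≤ A ≤ M and let f be convex on [m,M]. Then for every unit vector x, ⟨f(A)x, x⟩ ≤ K(m,M,f) · f(⟨Ax, x⟩), where K(m,M,f) = max_{t∈[m,M]} (1/f(t))·( ((M-t)/(M-m)) f(m) + ((t-m)/(M-m)) f(M) ), provided f is strictly positive on [m,M]. -/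
private lemma re_inner_le_of_le {H : Type*} [NormedAddCommGroup H] [InnerProductSpace ℂ H]
    [CompleteSpace H] {C D : H →L[ℂ] H} (h : C ≤ D) (x : H) :
    (inner ℂ (C x) x : ℂ).re ≤ (inner ℂ (D x) x : ℂ).re := by
  have hpos := (ContinuousLinearMap.le_def _ _ |>.mp h).inner_nonneg_left x
  simp only [RCLike.re_to_complex, ContinuousLinearMap.sub_apply, inner_sub_left,
    Complex.sub_re] at hpos
  have hre := (Complex.le_def.mp hpos).1
  rw [Complex.zero_re, Complex.sub_re] at hre
  linarith

private lemma re_inner_affine {H : Type*} [NormedAddCommGroup H] [InnerProductSpace ℂ H]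
    [CompleteSpace H] (A : H →L[ℂ] H) (a b : ℝ) (x : H) (hx : ‖x‖ = 1) :
    (inner ℂ ((a • (1 : H →L[ℂ] H) + b • A) x) x : ℂ).re = a + b * (inner ℂ (A x) x : ℂ).re := by
  have hxx : (inner ℂ x x : ℂ) = 1 := by
    rw [inner_self_eq_norm_sq_to_K, hx]; norm_num
  simp only [ContinuousLinearMap.add_apply, ContinuousLinearMap.smul_apply,
    ContinuousLinearMap.one_apply, RCLike.real_smul_eq_coe_smul (K := ℂ),
    inner_add_left, inner_smul_left, hxx, Complex.add_re, Complex.mul_re]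
  simp [Complex.conj_ofReal]

/-- Mond–Pečarić reverse of the scalar Jensen inequality for a convex,
continuous, strictly positive function on `[m,M]`. -/
theorem reverse_jensen_convex
    {H : Type*} [NormedAddCommGroup H] [InnerProductSpace ℂ H] [CompleteSpace H]
    (A : H →L[ℂ] H) (hA : IsSelfAdjoint A)
    (m M : ℝ) (hmM : m < M)
    (hA₁ : m • (1 : H →L[ℂ] H) ≤ A) (hA₂ : A ≤ M • (1 : H →L[ℂ] H))
    (f : ℝ → ℝ) (hfc : ContinuousOn f (Set.Icc m M)) (hf : ConvexOn ℝ (Set.Icc m M) f)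
    (hfpos : ∀ t ∈ Set.Icc m M, 0 < f t)
    (K : ℝ)
    (hK : IsGreatest ((fun t => (((M - t) / (M - m)) * f m + ((t - m) / (M - m)) * f M) / f t) ''
      Set.Icc m M) K)
    (x : H) (hx : ‖x‖ = 1) :
    (inner ℂ ((cfc f A) x) x : ℂ).re ≤ K * f ((inner ℂ (A x) x : ℂ).re) := by
  have hMm : (0:ℝ) < M - m := by linarith
  set b : ℝ := (f M - f m) / (M - m) with hb
  set a : ℝ := (M * f m - m * f M) / (M - m) with ha'
  -- spectrum in [m, M]
  have hm1 : m • (1 : H →L[ℂ] H) = algebraMap ℝ (H →L[ℂ] H) m := by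
    rw [Algebra.algebraMap_eq_smul_one]
  have hM1 : M • (1 : H →L[ℂ] H) = algebraMap ℝ (H →L[ℂ] H) M := by
    rw [Algebra.algebraMap_eq_smul_one]
  have hspec : spectrum ℝ A ⊆ Set.Icc m M := by
    intro t ht
    constructor
    · exact algebraMap_le_iff_le_spectrum hA |>.mp (hm1 ▸ hA₁) t ht
    · exact le_algebraMap_iff_spectrum_le hA |>.mp (hM1 ▸ hA₂) t ht
  -- convexity: f ≤ affine function on spectrum
  have key : ∀ t ∈ spectrum ℝ A, f t ≤ a + b * t := by
    intro t ht
    obtain ⟨htm, htM⟩ := hspec ht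
    have hl : (0:ℝ) ≤ (M - t) / (M - m) := div_nonneg (by linarith) hMm.le
    have hr : (0:ℝ) ≤ (t - m) / (M - m) := div_nonneg (by linarith) hMm.le
    have hsum : (M - t) / (M - m) + (t - m) / (M - m) = 1 := by
      field_simp
      ring
    have h2 := hf.2 (Set.left_mem_Icc.mpr hmM.le) (Set.right_mem_Icc.mpr hmM.le) hl hr hsum
    have ht' : ((M - t) / (M - m)) • m + ((t - m) / (M - m)) • M = t := by
      simp only [smul_eq_mul]
      field_simp
      ring
    rw [ht'] at h2
    calc f t ≤ ((M - t) / (M - m)) • f m + ((t - m) / (M - m)) • f M := h2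
      _ = a + b * t := by
          simp only [smul_eq_mul, hb, ha']
          field_simp
          ring
  -- operator inequality
  have hcfc : cfc f A ≤ cfc (fun t : ℝ => a + b * t) A :=
    cfc_mono key (hfc.mono hspec) (by fun_prop)
  have haff : cfc (fun t : ℝ => a + b * t) A = a • (1 : H →L[ℂ] H) + b • A := by
    rw [cfc_const_add a (fun t : ℝ => b * t) A (by fun_prop) hA,
      cfc_const_mul_id b A hA, Algebra.algebraMap_eq_smul_one]
  rw [haff] at hcfc
  set s : ℝ := (inner ℂ (A x) x : ℂ).re with hs
  have hstep : (inner ℂ ((cfc f A) x) x : ℂ).re ≤ a + b * s := by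
    have := re_inner_le_of_le hcfc x
    rwa [re_inner_affine A a b x hx] at this
  -- s ∈ [m, M]
  have hm0 : (inner ℂ ((m • (1 : H →L[ℂ] H)) x) x : ℂ).re = m := by
    have := re_inner_affine A m 0 x hx
    simpa using this
  have hM0 : (inner ℂ ((M • (1 : H →L[ℂ] H)) x) x : ℂ).re = M := by
    have := re_inner_affine A M 0 x hx
    simpa using this
  have hsm : m ≤ s := by
    have := re_inner_le_of_le hA₁ x
    rwa [hm0] at this
  have hsM : s ≤ M := by
    have := re_inner_le_of_le hA₂ x
    rwa [hM0] at this
  have hsmem : s ∈ Set.Icc m M := ⟨hsm, hsM⟩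
  have hfs : 0 < f s := hfpos s hsmem
  have hKs : (((M - s) / (M - m)) * f m + ((s - m) / (M - m)) * f M) / f s ≤ K :=
    hK.2 ⟨s, hsmem, rfl⟩
  have hratio : a + b * s = ((M - s) / (M - m)) * f m + ((s - m) / (M - m)) * f M := by
    simp only [hb, ha']
    field_simp
    ring
  have hfin : a + b * s ≤ K * f s := by
    rw [hratio]
    rw [div_le_iff₀ hfs] at hKs
    linarith
  linarith
end

section
/- Let m, M be positive scalars, let A, B be self-adjoint operators with m ≤ A, B ≤ M, and let f : [0, 2M] → [0,∞) be continuous, convex, strictly positive on [m, 2M], with f(0) = 0. Then f(A) + f(B) ≤ K(m,M,f) · f(A+B) in the Loewner order, where K(m,M,f) = max_{t∈[m,M]} (1/f(t))·( ((M-t)/(M-m)) f(m) + ((t-m)/(M-m)) f(M) ). -/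
set_option maxHeartbeats 1000000


/-- reverse subadditivity `f(A)+f(B) ≤ K(m,M,f) f(A+B)` for a continuous
convex function on `[0,2M]` with `f(0)=0` which is strictly positive on `[m,2M]`. -/
theorem reverse_subadditivity_convex_f0
    {H : Type*} [NormedAddCommGroup H] [InnerProductSpace ℂ H] [CompleteSpace H]
    (A B : H →L[ℂ] H) (hA : IsSelfAdjoint A) (hB : IsSelfAdjoint B)
    (m M : ℝ) (hm : 0 < m) (hmM : m < M)
    (hA₁ : m • (1 : H →L[ℂ] H) ≤ A) (hA₂ : A ≤ M • (1 : H →L[ℂ] H))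
    (hB₁ : m • (1 : H →L[ℂ] H) ≤ B) (hB₂ : B ≤ M • (1 : H →L[ℂ] H))
    (f : ℝ → ℝ) (hfc : ContinuousOn f (Set.Icc 0 (2 * M)))
    (hf : ConvexOn ℝ (Set.Icc 0 (2 * M)) f)
    (hfpos : ∀ t ∈ Set.Icc m (2 * M), 0 < f t)
    (hf0nonneg : ∀ t ∈ Set.Icc (0 : ℝ) (2 * M), 0 ≤ f t)
    (hf0 : f 0 = 0)
    (K : ℝ)
    (hK : IsGreatest ((fun t => (((M - t) / (M - m)) * f m + ((t - m) / (M - m)) * f M) / f t) ''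
      Set.Icc m M) K) :
    cfc f A + cfc f B ≤ K • cfc f (A + B) := by
  have hMm : (0:ℝ) < M - m := sub_pos.mpr hmM
  have hM0 : (0:ℝ) < M := hm.trans hmM
  set c₂ : ℝ := (f M - f m) / (M - m) with hc₂
  set c₁ : ℝ := (M * f m - m * f M) / (M - m) with hc₁
  have hmIcc : m ∈ Set.Icc (0:ℝ) (2*M) := ⟨hm.le, by linarith⟩
  have hMIcc : M ∈ Set.Icc (0:ℝ) (2*M) := ⟨hM0.le, by linarith⟩
  have hsmul : ∀ r : ℝ, r • (1 : H →L[ℂ] H) = algebraMap ℝ _ r :=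
    fun r => (Algebra.algebraMap_eq_smul_one r).symm
  have hAB : IsSelfAdjoint (A + B) := hA.add hB
  have hσA : spectrum ℝ A ⊆ Set.Icc m M := by
    intro x hx
    exact ⟨(algebraMap_le_iff_le_spectrum (r := m) (a := A) hA).mp (hsmul m ▸ hA₁) x hx,
      (le_algebraMap_iff_spectrum_le (r := M) (a := A) hA).mp (hsmul M ▸ hA₂) x hx⟩
  have hσB : spectrum ℝ B ⊆ Set.Icc m M := by
    intro x hx
    exact ⟨(algebraMap_le_iff_le_spectrum (r := m) (a := B) hB).mp (hsmul m ▸ hB₁) x hx,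
      (le_algebraMap_iff_spectrum_le (r := M) (a := B) hB).mp (hsmul M ▸ hB₂) x hx⟩
  have hσAB : spectrum ℝ (A + B) ⊆ Set.Icc (2*m) (2*M) := by
    intro x hx
    have h1 : algebraMap ℝ (H →L[ℂ] H) (2*m) ≤ A + B := by
      rw [← hsmul, two_mul, add_smul]
      exact add_le_add hA₁ hB₁
    have h2 : A + B ≤ algebraMap ℝ (H →L[ℂ] H) (2*M) := by
      rw [← hsmul, two_mul, add_smul]
      exact add_le_add hA₂ hB₂
    exact ⟨(algebraMap_le_iff_le_spectrum (a := A + B) hAB).mp h1 x hx,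
      (le_algebraMap_iff_spectrum_le (a := A + B) hAB).mp h2 x hx⟩
  -- chord inequality
  have chord : ∀ t ∈ Set.Icc m M, f t ≤ c₁ + c₂ * t := by
    intro t ht
    have ha' : 0 ≤ (M - t)/(M - m) := div_nonneg (by linarith [ht.2]) hMm.le
    have hb' : 0 ≤ (t - m)/(M - m) := div_nonneg (by linarith [ht.1]) hMm.le
    have hab : (M - t)/(M-m) + (t-m)/(M-m) = 1 := by field_simp; ring
    have h := hf.2 hmIcc hMIcc ha' hb' hab
    simp only [smul_eq_mul] at h
    have hcomb : (M - t)/(M-m) * m + (t-m)/(M-m) * M = t := by field_simp; ring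
    rw [hcomb] at h
    refine h.trans_eq ?_
    rw [hc₁, hc₂]
    field_simp
    ring
  have hLc : ∀ u : ℝ, ((M - u) / (M - m)) * f m + ((u - m) / (M - m)) * f M = c₁ + c₂ * u := by
    intro u
    rw [hc₁, hc₂]
    field_simp
    ring
  have hKb : ∀ u ∈ Set.Icc m M, c₁ + c₂ * u ≤ K * f u := by
    intro u hu
    have hfu : 0 < f u := hfpos u ⟨hu.1, by linarith [hu.2]⟩
    have h := hK.2 ⟨u, hu, rfl⟩
    rw [div_le_iff₀ hfu, hLc u] at h
    exact h
  have hK0 : 0 ≤ K := by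
    obtain ⟨u, hu, hKu⟩ := hK.1
    have hfu : 0 < f u := hfpos u ⟨hu.1, by linarith [hu.2]⟩
    have h1 : 0 ≤ ((M - u)/(M-m)) * f m + ((u - m)/(M-m)) * f M :=
      add_nonneg
        (mul_nonneg (div_nonneg (by linarith [hu.2]) hMm.le) (hf0nonneg m hmIcc))
        (mul_nonneg (div_nonneg (by linarith [hu.1]) hMm.le) (hf0nonneg M hMIcc))
    rw [← hKu]
    exact div_nonneg h1 hfu.le
  -- key scalar inequality on [2m, 2M]
  have hg : ∀ t ∈ Set.Icc (2*m) (2*M), 2*c₁ + c₂ * t ≤ K * f t := by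
    intro t ht
    have hu : t/2 ∈ Set.Icc m M := ⟨by linarith [ht.1], by linarith [ht.2]⟩
    have h1 : c₁ + c₂ * (t/2) ≤ K * f (t/2) := hKb _ hu
    have ht02 : t ∈ Set.Icc (0:ℝ) (2*M) := ⟨by linarith [ht.1], ht.2⟩
    have h2 : f (t/2) ≤ f t / 2 := by
      have h0 : (0:ℝ) ∈ Set.Icc (0:ℝ) (2*M) := ⟨le_rfl, by linarith⟩
      have h := hf.2 h0 ht02 (by norm_num : (0:ℝ) ≤ 1/2) (by norm_num : (0:ℝ) ≤ 1/2)
        (by norm_num)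
      simp only [smul_eq_mul, mul_zero, zero_add, hf0] at h
      have : (1/2 : ℝ) * t = t/2 := by ring
      rw [this] at h
      linarith
    nlinarith [mul_le_mul_of_nonneg_left h2 hK0]
  -- continuity on spectra
  have hsub₁ : Set.Icc m M ⊆ Set.Icc (0:ℝ) (2*M) := Set.Icc_subset_Icc hm.le (by linarith)
  have hsub₂ : Set.Icc (2*m) (2*M) ⊆ Set.Icc (0:ℝ) (2*M) :=
    Set.Icc_subset_Icc (by linarith) le_rfl
  have hfcA : ContinuousOn f (spectrum ℝ A) := hfc.mono (hσA.trans hsub₁)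
  have hfcB : ContinuousOn f (spectrum ℝ B) := hfc.mono (hσB.trans hsub₁)
  have hfcAB : ContinuousOn f (spectrum ℝ (A + B)) := hfc.mono (hσAB.trans hsub₂)
  -- operator steps
  have hstep1 : cfc f A ≤ c₁ • (1 : H →L[ℂ] H) + c₂ • A := by
    have h := cfc_mono (fun x hx => chord x (hσA hx)) hfcA (by fun_prop)
    refine h.trans_eq ?_
    rw [cfc_const_add c₁ (fun t => c₂ * t) A (by fun_prop) hA,
      cfc_const_mul_id c₂ A hA, Algebra.algebraMap_eq_smul_one]
  have hstep2 : cfc f B ≤ c₁ • (1 : H →L[ℂ] H) + c₂ • B := by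
    have h := cfc_mono (fun x hx => chord x (hσB hx)) hfcB (by fun_prop)
    refine h.trans_eq ?_
    rw [cfc_const_add c₁ (fun t => c₂ * t) B (by fun_prop) hB,
      cfc_const_mul_id c₂ B hB, Algebra.algebraMap_eq_smul_one]
  have hstep3 : (2*c₁) • (1 : H →L[ℂ] H) + c₂ • (A + B) ≤ K • cfc f (A + B) := by
    have he : (2*c₁) • (1 : H →L[ℂ] H) + c₂ • (A + B)
        = cfc (fun t => 2*c₁ + c₂ * t) (A + B) := by
      rw [cfc_const_add (2*c₁) (fun t => c₂ * t) (A + B) (by fun_prop) hAB,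
        cfc_const_mul_id c₂ (A + B) hAB, Algebra.algebraMap_eq_smul_one]
    rw [he, ← cfc_const_mul K f (A + B) hfcAB]
    exact cfc_mono (fun x hx => hg x (hσAB hx)) (by fun_prop) (hfcAB.const_smul K)
  calc cfc f A + cfc f B
      ≤ (c₁ • (1 : H →L[ℂ] H) + c₂ • A) + (c₁ • (1 : H →L[ℂ] H) + c₂ • B) :=
        add_le_add hstep1 hstep2
    _ = (2*c₁) • (1 : H →L[ℂ] H) + c₂ • (A + B) := by module
    _ ≤ K • cfc f (A + B) := hstep3
end
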